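/- arXiv:1907.09371 — 9 statements merged into one kernel-verified Lean document; each statement's English description precedes it below -/
import Mathlib

section
/- Let n be a natural number and let p and q be real polynomials of degree at most n. If there exist 2n+1 pairwise distinct real numbers x_0, x_1, ..., x_{2n} such that |p(x_i)| = |q(x_i)| for all 0 ≤ i ≤ 2n, then q = p or q = -p. -/
/-!
`|p(xᵢ)| = |q(xᵢ)|` says that `q² - p²` vanishes at the `2n + 1` points; having degree at
most `2n`, it is the zero polynomial, and `q² = p²` in the domain `R[X]` gives `q = ±p`.
-/

open Polynomial

theorem Polynomial.eq_or_eq_neg_of_eval_sq_eq {R : Type*} [CommRing R] [IsDomain R] {n : ℕ}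
    {p q : R[X]} (hp : p.natDegree ≤ n) (hq : q.natDegree ≤ n)
    {x : Fin (2 * n + 1) → R} (hx : Function.Injective x)
    (h : ∀ i, p.eval (x i) ^ 2 = q.eval (x i) ^ 2) :
    q = p ∨ q = -p := by
  have hdeg : (q ^ 2 - p ^ 2).natDegree < Fintype.card (Fin (2 * n + 1)) := by
    rw [Fintype.card_fin]
    refine (natDegree_sub_le _ _).trans_lt ?_
    have := natDegree_pow_le (p := q) (n := 2)
    have := natDegree_pow_le (p := p) (n := 2)
    omega
  have hsq : q ^ 2 - p ^ 2 = 0 :=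
    eq_zero_of_natDegree_lt_card_of_eval_eq_zero _ hx (fun i => by simp [h i]) hdeg
  exact sq_eq_sq_iff_eq_or_eq_neg.mp (sub_eq_zero.mp hsq)

/-- Let `n` be a natural number and let `p` and `q` be real polynomials of
degree at most `n`. If there exist `2n+1` pairwise distinct real numbers `x₀, …, x_{2n}` such
that `|p(xᵢ)| = |q(xᵢ)|` for all `i`, then `q = p` or `q = -p`. -/
theorem phaseless_real_identification (n : ℕ) (p q : Polynomial ℝ)
    (hp : p.natDegree ≤ n) (hq : q.natDegree ≤ n)
    (x : Fin (2 * n + 1) → ℝ) (hx : Function.Injective x)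
    (h : ∀ i, |p.eval (x i)| = |q.eval (x i)|) :
    q = p ∨ q = -p :=
  eq_or_eq_neg_of_eval_sq_eq hp hq hx fun i => sq_eq_sq_iff_abs_eq_abs _ _ |>.mpr (h i)
end

section
/- Let n be a natural number, let x_0, x_1, ..., x_n be pairwise distinct real numbers, and let p be a real polynomial of degree at most n. Then the set S of all real numbers x for which there exist real polynomials q and r of degree at most n with q ≠ r, |q(x_i)| = |p(x_i)| and |r(x_i)| = |p(x_i)| for all 0 ≤ i ≤ n, and q(x) = r(x), is finite. -/
/-!
A polynomial of degree at most `n` is determined by its values at the `n + 1` nodes `xᵢ`, and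
the condition `|q(xᵢ)| = |p(xᵢ)|` leaves at most two choices for each value. Hence only finitely
many polynomials are admissible, and each of the finitely many pairs `q ≠ r` among them agrees
only at the finitely many roots of `q - r`.
-/

open Polynomial

theorem Set.finite_setOf_abs_eq_abs {α : Type*} [AddGroup α] [LinearOrder α]
    [AddLeftMono α] (b : α) : {a : α | |a| = |b|}.Finite :=
  (Set.toFinite {b, -b}).subset fun _ ha => abs_eq_abs.mp ha

namespace Polynomial

variable {R : Type*} [CommRing R] [IsDomain R]

theorem injOn_eval_of_natDegree_lt_card {ι : Type*} [Fintype ι] {x : ι → R}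
    (hx : Function.Injective x) {n : ℕ} (hn : n < Fintype.card ι) :
    Set.InjOn (fun (q : R[X]) i => q.eval (x i)) {q | q.natDegree ≤ n} :=
  fun q hq r hr h => eq_of_natDegree_lt_card_of_eval_eq q r hx (congrFun h)
    ((max_le hq hr).trans_lt hn)

theorem finite_setOf_natDegree_le_of_eval_mem {ι : Type*} [Fintype ι] {x : ι → R}
    (hx : Function.Injective x) {n : ℕ} (hn : n < Fintype.card ι) {s : ι → Set R}
    (hs : ∀ i, (s i).Finite) :
    {q : R[X] | q.natDegree ≤ n ∧ ∀ i, q.eval (x i) ∈ s i}.Finite := by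
  refine Set.Finite.of_finite_image ((Set.Finite.pi' hs).subset ?_)
    ((injOn_eval_of_natDegree_lt_card hx hn).mono fun _ hq => hq.1)
  rintro _ ⟨q, hq, rfl⟩
  exact hq.2

theorem finite_setOf_eval_eq {q r : R[X]} (h : q ≠ r) : {t : R | q.eval t = r.eval t}.Finite :=
  (finite_setOfPred_isRoot (sub_ne_zero.mpr h)).subset fun t ht => by
    simpa [sub_eq_zero] using ht

theorem finite_setOf_exists_ne_eval_eq {P : Set R[X]} (hP : P.Finite) :
    {t : R | ∃ q ∈ P, ∃ r ∈ P, q ≠ r ∧ q.eval t = r.eval t}.Finite := by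
  refine (hP.offDiag.biUnion fun qr hqr => finite_setOf_eval_eq hqr.2.2).subset ?_
  rintro t ⟨q, hq, r, hr, hne, ht⟩
  exact Set.mem_biUnion (x := (q, r)) ⟨hq, hr, hne⟩ ht

end Polynomial

theorem exceptional_set_finite_general (n : ℕ) (x : Fin (n + 1) → ℝ) (hx : Function.Injective x)
    (p : Polynomial ℝ) :
    {t : ℝ | ∃ q r : Polynomial ℝ, q.natDegree ≤ n ∧ r.natDegree ≤ n ∧ q ≠ r ∧
      (∀ i, |q.eval (x i)| = |p.eval (x i)|) ∧
      (∀ i, |r.eval (x i)| = |p.eval (x i)|) ∧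
      q.eval t = r.eval t}.Finite := by
  have hadmissible := finite_setOf_natDegree_le_of_eval_mem hx
    (n.lt_succ_self.trans_eq (Fintype.card_fin _).symm)
    (s := fun i => {a | |a| = |p.eval (x i)|}) fun i => Set.finite_setOf_abs_eq_abs _
  refine (finite_setOf_exists_ne_eval_eq hadmissible).subset ?_
  rintro t ⟨q, r, hq, hr, hne, hqp, hrp, ht⟩
  exact ⟨q, ⟨hq, hqp⟩, r, ⟨hr, hrp⟩, hne, ht⟩

/-- Let `x₀, …, xₙ` be pairwise distinct real numbers and let `p` be a real
polynomial of degree at most `n`. Then the set `S` of all real numbers `t` for which there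
exist real polynomials `q ≠ r` of degree at most `n` matching `|p|` at all the `xᵢ` and with
`q(t) = r(t)` is finite. -/
theorem exceptional_set_finite (n : ℕ) (x : Fin (n + 1) → ℝ) (hx : Function.Injective x)
    (p : Polynomial ℝ) (hp : p.natDegree ≤ n) :
    {t : ℝ | ∃ q r : Polynomial ℝ, q.natDegree ≤ n ∧ r.natDegree ≤ n ∧ q ≠ r ∧
      (∀ i, |q.eval (x i)| = |p.eval (x i)|) ∧
      (∀ i, |r.eval (x i)| = |p.eval (x i)|) ∧
      q.eval t = r.eval t}.Finite :=
  exceptional_set_finite_general n x hx p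
end

section
/- Let n be a natural number, let x_0, x_1, ..., x_n be pairwise distinct real numbers, and let p be a real polynomial of degree at most n. Then there exists a real number x* such that every real polynomial q of degree at most n satisfying |q(x_i)| = |p(x_i)| for all 0 ≤ i ≤ n and q(x*) = p(x*) is equal to p. -/
/-!
Up to sign, `q` is pinned down at the `n + 1` nodes, and a polynomial of degree at most `n` is
determined by its values there; so only finitely many `q` are compatible with the signless data.
Each of them other than `p` agrees with `p` at finitely many points only, so any point outside
this finite set of coincidences serves as `x⋆`.
-/

open Polynomial

namespace Polynomial

theorem finite_setOf_degree_lt_of_eval_mem {R ι : Type*} [CommRing R] [IsDomain R] [Fintype ι]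
    {v : ι → R} (hv : Function.Injective v) {V : ι → Set R} (hV : ∀ i, (V i).Finite) :
    {q : R[X] | q.degree < Fintype.card ι ∧ ∀ i, q.eval (v i) ∈ V i}.Finite := by
  refine Set.Finite.of_finite_image (f := fun q i ↦ q.eval (v i))
    ((Set.Finite.pi hV).subset ?_) ?_
  · rintro _ ⟨q, ⟨-, hq⟩, rfl⟩ i -
    exact hq i
  · rintro f ⟨hf, -⟩ g ⟨hg, -⟩ hfg
    exact eq_of_degrees_lt_of_eval_index_eq Finset.univ hv.injOn hf hg
      fun i _ ↦ congr_fun hfg i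

theorem exists_forall_eval_eq_imp_eq {R : Type*} [CommRing R] [IsDomain R] [Infinite R]
    (p : R[X]) {S : Set R[X]} (hS : S.Finite) : ∃ t, ∀ q ∈ S, q.eval t = p.eval t → q = p := by
  have hroots : (⋃ q ∈ S \ {p}, {t | (q - p).IsRoot t}).Finite :=
    hS.sdiff.biUnion fun q hq ↦ finite_setOfPred_isRoot (sub_ne_zero.mpr hq.2)
  obtain ⟨t, -, ht⟩ := Set.infinite_univ.exists_notMem_finite hroots
  refine ⟨t, fun q hq hqt ↦ by_contra fun hne ↦ ht ?_⟩
  exact Set.mem_biUnion ⟨hq, hne⟩ (by simp [hqt])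

end Polynomial

theorem adaptive_exact_evaluation_identifies_general (n : ℕ) (x : Fin (n + 1) → ℝ)
    (hx : Function.Injective x) (p : Polynomial ℝ) :
    ∃ xstar : ℝ, ∀ q : Polynomial ℝ, q.natDegree ≤ n →
      (∀ i, |q.eval (x i)| = |p.eval (x i)|) →
      q.eval xstar = p.eval xstar → q = p := by
  have hcandidates := finite_setOf_degree_lt_of_eval_mem hx
    (V := fun i ↦ {p.eval (x i), -p.eval (x i)}) fun i ↦ Set.toFinite _
  obtain ⟨xstar, hxstar⟩ := exists_forall_eval_eq_imp_eq p hcandidates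
  refine ⟨xstar, fun q hq habs ↦ hxstar q ⟨?_, fun i ↦ abs_eq_abs.mp (habs i)⟩⟩
  rw [Fintype.card_fin]
  exact (degree_le_natDegree).trans_lt (by exact_mod_cast Nat.lt_succ_of_le hq)

/-- Let `x₀, …, xₙ` be pairwise distinct real numbers and let `p` be a real
polynomial of degree at most `n`. Then there exists a real number `x⋆` such that every real
polynomial `q` of degree at most `n` satisfying `|q(xᵢ)| = |p(xᵢ)|` for all `i` and
`q(x⋆) = p(x⋆)` is equal to `p`. -/
theorem adaptive_exact_evaluation_identifies (n : ℕ) (x : Fin (n + 1) → ℝ)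
    (hx : Function.Injective x) (p : Polynomial ℝ) (hp : p.natDegree ≤ n) :
    ∃ xstar : ℝ, ∀ q : Polynomial ℝ, q.natDegree ≤ n →
      (∀ i, |q.eval (x i)| = |p.eval (x i)|) →
      q.eval xstar = p.eval xstar → q = p :=
  adaptive_exact_evaluation_identifies_general n x hx p
end

section
/- Let A be a subfield of the field ℝ of real numbers and let t ∈ ℝ be transcendental over A. Let n be a natural number, let x_0, x_1, ..., x_n be pairwise distinct elements of A, and let p and q be polynomials of degree at most n with coefficients in A. If |q(x_i)| = |p(x_i)| for all 0 ≤ i ≤ n (values taken in ℝ via the inclusion of A) and q(t) = p(t) (evaluation in ℝ), then q = p. -/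
theorem subfield_nonadaptive_identification_general (A : Subfield ℝ) (t : ℝ)
    (ht : Transcendental A t)
    (p q : Polynomial A)
    (hexact : Polynomial.aeval t q = Polynomial.aeval t p) :
    q = p :=
  transcendental_iff_injective.mp ht hexact

/-- Let `A` be a subfield of `ℝ` and let `t ∈ ℝ` be transcendental over `A`.
Let `x₀, …, xₙ` be pairwise distinct elements of `A` and let `p`, `q` be polynomials of degree
at most `n` with coefficients in `A`. If `|q(xᵢ)| = |p(xᵢ)|` for all `i` (values taken in `ℝ`)
and `q(t) = p(t)`, then `q = p`. -/
theorem subfield_nonadaptive_identification (A : Subfield ℝ) (t : ℝ)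
    (ht : Transcendental A t) (n : ℕ) (x : Fin (n + 1) → A) (hx : Function.Injective x)
    (p q : Polynomial A) (hp : p.natDegree ≤ n) (hq : q.natDegree ≤ n)
    (habs : ∀ i, |Polynomial.aeval ((x i : ℝ)) q| = |Polynomial.aeval ((x i : ℝ)) p|)
    (hexact : Polynomial.aeval t q = Polynomial.aeval t p) :
    q = p :=
  subfield_nonadaptive_identification_general A t ht p q hexact
end

section
/- Let n be a natural number, let x_0, x_1, ..., x_n be pairwise distinct complex numbers, let f be a complex polynomial of degree at most n with f(x_i) ≠ 0 for all 0 ≤ i ≤ n, and let x'_0, x'_1, ..., x'_{n-1} be arbitrary complex numbers. Then there exist complex polynomials p and q of degree at most n with p ≠ q such that |p(x_i)| = |f(x_i)| and |q(x_i)| = |f(x_i)| for all 0 ≤ i ≤ n, and p(x'_j) = q(x'_j) for all 0 ≤ j ≤ n-1. -/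
/-!
Put `g = ∏ⱼ (X - x'ⱼ)`, of degree `n`, and scale it by `c ≠ 0` so that every
`dᵢ = c g(xᵢ) / f(xᵢ)` has modulus at most `2`. Each `dᵢ` is then a difference `uᵢ - vᵢ` of
two unimodular numbers, and the interpolants `p`, `q` of the data `f(xᵢ) uᵢ`, `f(xᵢ) vᵢ` at the
`n + 1` nodes have the moduli of `f` there. Since `p - q` and `c g` have degree at most `n` and
agree at the nodes, `p - q = c g`, which is nonzero and vanishes at every `x'ⱼ`.
-/

open Polynomial Lagrange Finset

namespace Complex

theorem exists_norm_eq_one_sub_eq (d : ℂ) (hd : ‖d‖ ≤ 2) :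
    ∃ u v : ℂ, ‖u‖ = 1 ∧ ‖v‖ = 1 ∧ u - v = d := by
  set α := Real.arccos (‖d‖ / 2)
  have hcos : Real.cos α = ‖d‖ / 2 :=
    Real.cos_arccos (by linarith [norm_nonneg d]) (by linarith)
  -- `e^{iα} + e^{-iα} = 2 cos α = ‖d‖`, rotated into the direction of `d`.
  refine ⟨exp (arg d * I) * exp (α * I), -(exp (arg d * I) * exp (-α * I)), ?_, ?_, ?_⟩
  · rw [norm_mul, norm_exp_ofReal_mul_I, norm_exp_ofReal_mul_I, one_mul]
  · rw [norm_neg, norm_mul, ← ofReal_neg, norm_exp_ofReal_mul_I, norm_exp_ofReal_mul_I, one_mul]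
  · calc exp (arg d * I) * exp (α * I) - -(exp (arg d * I) * exp (-α * I))
        = exp (arg d * I) * (2 * cos α) := by rw [two_cos]; ring
      _ = ‖d‖ * exp (arg d * I) := by rw [← ofReal_cos, hcos]; push_cast; ring
      _ = d := norm_mul_exp_arg_mul_I d

end Complex

theorem exists_ne_zero_forall_norm_mul_le {𝕜 ι : Type*} [NontriviallyNormedField 𝕜] [Fintype ι]
    (a : ι → 𝕜) {r : ℝ} (hr : 0 < r) : ∃ c ≠ 0, ∀ i, ‖c * a i‖ ≤ r := by
  set M := ∑ i, ‖a i‖ + 1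
  have hM : 0 < M := by positivity
  obtain ⟨c, hc0, hcM⟩ := NormedField.exists_norm_lt 𝕜 (div_pos hr hM)
  refine ⟨c, norm_pos_iff.mp hc0, fun i => ?_⟩
  have hai : ‖a i‖ ≤ M :=
    (single_le_sum (fun j _ => norm_nonneg (a j)) (mem_univ i)).trans
      (le_add_of_nonneg_right zero_le_one)
  calc ‖c * a i‖ = ‖c‖ * ‖a i‖ := norm_mul c (a i)
    _ ≤ r / M * M := mul_le_mul hcM.le hai (norm_nonneg _) (div_pos hr hM).le
    _ = r := div_mul_cancel₀ r hM.ne'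

namespace Polynomial

theorem natDegree_le_of_degree_lt_succ {R : Type*} [Semiring R] {p : R[X]} {n : ℕ}
    (h : p.degree < ↑(n + 1)) : p.natDegree ≤ n := by
  rw [natDegree_le_iff_degree_le, ← mem_degreeLE, ← degreeLT_succ_eq_degreeLE, mem_degreeLT]
  exact_mod_cast h

theorem exists_norm_eval_eq_sub_eq_C_mul {ι : Type*} [Fintype ι] {x : ι → ℂ}
    (hx : Function.Injective x) {y : ι → ℂ} (hy : ∀ i, y i ≠ 0) {g : ℂ[X]}
    (hg : g.degree < Fintype.card ι) :
    ∃ p q : ℂ[X], p.degree < Fintype.card ι ∧ q.degree < Fintype.card ι ∧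
      (∀ i, ‖p.eval (x i)‖ = ‖y i‖) ∧ (∀ i, ‖q.eval (x i)‖ = ‖y i‖) ∧
      ∃ c ≠ 0, p - q = C c * g := by
  classical
  obtain ⟨c, hc, hcd⟩ := exists_ne_zero_forall_norm_mul_le (fun i => g.eval (x i) / y i) two_pos
  choose u v hu hv huv using fun i => Complex.exists_norm_eq_one_sub_eq _ (hcd i)
  have hinj : Set.InjOn x (univ : Finset ι) := hx.injOn
  set p := interpolate univ x (fun i => y i * u i)
  set q := interpolate univ x (fun i => y i * v i)
  have hp : p.degree < Fintype.card ι := by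
    simpa only [card_univ] using degree_interpolate_lt _ hinj
  have hq : q.degree < Fintype.card ι := by
    simpa only [card_univ] using degree_interpolate_lt _ hinj
  have hpx i : p.eval (x i) = y i * u i := eval_interpolate_at_node _ hinj (mem_univ i)
  have hqx i : q.eval (x i) = y i * v i := eval_interpolate_at_node _ hinj (mem_univ i)
  refine ⟨p, q, hp, hq, fun i => ?_, fun i => ?_, c, hc, ?_⟩
  · rw [hpx, norm_mul, hu, mul_one]
  · rw [hqx, norm_mul, hv, mul_one]
  · refine eq_of_degrees_lt_of_eval_index_eq univ hinj ?_ ?_ fun i _ => ?_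
    · simpa using (degree_sub_le p q).trans_lt (max_lt hp hq)
    · simpa [degree_C_mul hc] using hg
    · rw [eval_sub, hpx, hqx, ← mul_sub, huv, eval_mul, eval_C]
      field_simp [hy i]

end Polynomial

theorem complex_no_go_general (n : ℕ) (x : Fin (n + 1) → ℂ) (hx : Function.Injective x)
    (f : Polynomial ℂ) (hf0 : ∀ i, f.eval (x i) ≠ 0)
    (x' : Fin n → ℂ) :
    ∃ p q : Polynomial ℂ, p.natDegree ≤ n ∧ q.natDegree ≤ n ∧ p ≠ q ∧
      (∀ i, ‖p.eval (x i)‖ = ‖f.eval (x i)‖) ∧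
      (∀ i, ‖q.eval (x i)‖ = ‖f.eval (x i)‖) ∧
      (∀ j, p.eval (x' j) = q.eval (x' j)) := by
  have hg : (nodal univ x').degree < Fintype.card (Fin (n + 1)) := by
    rw [degree_nodal, card_univ, Fintype.card_fin, Fintype.card_fin]
    exact_mod_cast n.lt_succ_self
  obtain ⟨p, q, hp, hq, hpx, hqx, c, hc, hpq⟩ := exists_norm_eval_eq_sub_eq_C_mul hx hf0 hg
  have hpq0 : p - q ≠ 0 := hpq ▸ mul_ne_zero (C_ne_zero.mpr hc) nodal_ne_zero
  rw [Fintype.card_fin] at hp hq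
  refine ⟨p, q, natDegree_le_of_degree_lt_succ hp, natDegree_le_of_degree_lt_succ hq,
    sub_ne_zero.mp hpq0, hpx, hqx, fun j => ?_⟩
  rw [← sub_eq_zero, ← eval_sub, hpq, eval_mul, eval_nodal_at_node (mem_univ j), mul_zero]

/-- Let `x₀, …, xₙ` be pairwise distinct complex numbers, let `f` be a
complex polynomial of degree at most `n` with `f(xᵢ) ≠ 0` for all `i`, and let
`x'₀, …, x'_{n-1}` be arbitrary complex numbers. Then there exist complex polynomials
`p ≠ q` of degree at most `n` such that `|p(xᵢ)| = |f(xᵢ)| = |q(xᵢ)|` for all `i`, and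
`p(x'ⱼ) = q(x'ⱼ)` for all `j`. -/
theorem complex_no_go (n : ℕ) (x : Fin (n + 1) → ℂ) (hx : Function.Injective x)
    (f : Polynomial ℂ) (hf : f.natDegree ≤ n) (hf0 : ∀ i, f.eval (x i) ≠ 0)
    (x' : Fin n → ℂ) :
    ∃ p q : Polynomial ℂ, p.natDegree ≤ n ∧ q.natDegree ≤ n ∧ p ≠ q ∧
      (∀ i, ‖p.eval (x i)‖ = ‖f.eval (x i)‖) ∧
      (∀ i, ‖q.eval (x i)‖ = ‖f.eval (x i)‖) ∧
      (∀ j, p.eval (x' j) = q.eval (x' j)) :=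
  complex_no_go_general n x hx f hf0 x'
end

section
/- Let n ≥ 1, let x_0, x_1, ..., x_{2n} be pairwise distinct nonnegative real numbers, and let θ_0, θ_1, ..., θ_{2n} be pairwise distinct angles in [0, 2π). Let p and q be complex polynomials of degree at most n. If |p(x_i · e^{iθ_k})| = |q(x_i · e^{iθ_k})| for all 0 ≤ i ≤ 2n and all 0 ≤ k ≤ 2n, then there exists a complex number u with |u| = 1 such that q = u·p. -/
open Polynomial ComplexConjugate Finset

/-!
Fix a direction `e` on the unit circle. For real `r`, `|p(r e)|² = p(r e) · p̄(r ē)` is a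
polynomial of degree `≤ 2n` in `r`, so the `2n + 1` radii determine it; its `d`-th coefficient
is `∑_{j+l=d} a_j ā_l e^j ē^l`. As `ē = e⁻¹`, multiplying by `e^d` turns this into the
polynomial `∑_{j+l=d} a_j ā_l Y^{2j}` of degree `≤ 2n` evaluated at `Y = e`, so the `2n + 1`
angles determine every product `a_j ā_l`, and these determine `(a_j)` up to a unimodular factor.
-/

namespace Polynomial

theorem exists_norm_eq_one_of_coeff_mul_conj_eq {𝕜 : Type*} [RCLike 𝕜] {p q : 𝕜[X]}
    (h : ∀ j l, p.coeff j * conj (p.coeff l) = q.coeff j * conj (q.coeff l)) :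
    ∃ u : 𝕜, ‖u‖ = 1 ∧ q = C u * p := by
  have hnorm (j : ℕ) : ‖p.coeff j‖ = ‖q.coeff j‖ := by
    have := h j j
    rw [RCLike.mul_conj, RCLike.mul_conj] at this
    exact (pow_left_inj₀ (norm_nonneg _) (norm_nonneg _) two_ne_zero).mp (by exact_mod_cast this)
  by_cases hp : p = 0
  · refine ⟨1, norm_one, ext fun m => ?_⟩
    have hq : q.coeff m = 0 := by simpa [hp] using (hnorm m).symm
    simp [hp, hq]
  set a := p.leadingCoeff
  set b := q.coeff p.natDegree
  have ha : a ≠ 0 := leadingCoeff_ne_zero.mpr hp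
  have hab : ‖a‖ = ‖b‖ := hnorm _
  refine ⟨b / a, by rw [norm_div, ← hab, div_self (norm_ne_zero_iff.mpr ha)], ext fun m => ?_⟩
  have hm : p.coeff m * conj a = q.coeff m * conj b := h m p.natDegree
  have hconj : conj b * b = conj a * a := by
    rw [RCLike.conj_mul, RCLike.conj_mul, hab]
  rw [coeff_C_mul, div_mul_eq_mul_div, eq_div_iff ha]
  apply mul_left_cancel₀ ((_root_.map_ne_zero (starRingEnd 𝕜)).mpr ha)
  linear_combination -b * hm - q.coeff m * hconj

noncomputable def radialNormSq (p : ℂ[X]) (e : ℂ) : ℂ[X] :=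
  p.comp (C e * X) * (p.map (starRingEnd ℂ)).comp (C (conj e) * X)

variable {p q : ℂ[X]} {n : ℕ}

theorem natDegree_radialNormSq_le (hp : p.natDegree ≤ n) (e : ℂ) :
    (radialNormSq p e).natDegree ≤ 2 * n := by
  have hscale (r : ℂ[X]) (c : ℂ) (hr : r.natDegree ≤ n) :
      (r.comp (C c * X)).natDegree ≤ n :=
    natDegree_le_iff_coeff_eq_zero.mpr fun m hm => by
      rw [comp_C_mul_X_coeff, coeff_eq_zero_of_natDegree_lt (hr.trans_lt hm), zero_mul]
  rw [radialNormSq, two_mul]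
  exact natDegree_mul_le.trans <|
    add_le_add (hscale p e hp) (hscale _ (conj e) (natDegree_map_le.trans hp))

theorem eval_ofReal_radialNormSq (p : ℂ[X]) (e : ℂ) (r : ℝ) :
    (radialNormSq p e).eval (r : ℂ) = ‖p.eval (r * e)‖ ^ 2 := by
  rw [← Complex.mul_conj', radialNormSq, eval_mul, eval_comp, eval_comp, eval_map,
    ← eval₂_at_apply]
  simp only [eval_mul, eval_C, eval_X, map_mul, Complex.conj_ofReal, mul_comm]

theorem coeff_radialNormSq (p : ℂ[X]) (e : ℂ) (d : ℕ) :
    (radialNormSq p e).coeff d =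
      ∑ jl ∈ antidiagonal d, p.coeff jl.1 * conj (p.coeff jl.2) * e ^ jl.1 * conj e ^ jl.2 := by
  rw [radialNormSq, coeff_mul]
  refine sum_congr rfl fun jl _ => ?_
  rw [comp_C_mul_X_coeff, comp_C_mul_X_coeff, coeff_map]
  ring

theorem radialNormSq_eq_of_norm_eval_eq {ι : Type*} [Fintype ι] {x : ι → ℝ}
    (hx : Function.Injective x) (hcard : 2 * n < Fintype.card ι)
    (hp : p.natDegree ≤ n) (hq : q.natDegree ≤ n) {e : ℂ}
    (h : ∀ i, ‖p.eval (x i * e)‖ = ‖q.eval (x i * e)‖) :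
    radialNormSq p e = radialNormSq q e := by
  refine eq_of_natDegree_lt_card_of_eval_eq _ _ (Complex.ofReal_injective.comp hx) (fun i => ?_)
    (max_le (natDegree_radialNormSq_le hp e) (natDegree_radialNormSq_le hq e) |>.trans_lt hcard)
  simp only [Function.comp_apply, eval_ofReal_radialNormSq, h]

noncomputable def antidiagonalGramPoly (p : ℂ[X]) (d : ℕ) : ℂ[X] :=
  ∑ jl ∈ antidiagonal d, C (p.coeff jl.1 * conj (p.coeff jl.2)) * X ^ (2 * jl.1)

theorem eval_antidiagonalGramPoly (p : ℂ[X]) (d : ℕ) {e : ℂ} (he : ‖e‖ = 1) :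
    (antidiagonalGramPoly p d).eval e = e ^ d * (radialNormSq p e).coeff d := by
  have hunit : e * conj e = 1 := by rw [Complex.mul_conj', he]; norm_num
  rw [antidiagonalGramPoly, coeff_radialNormSq, eval_finsetSum, mul_sum]
  refine sum_congr rfl fun jl hjl => ?_
  rw [← HasAntidiagonal.mem_antidiagonal.mp hjl]
  simp only [eval_mul, eval_C, eval_pow, eval_X]
  linear_combination (-(p.coeff jl.1 * conj (p.coeff jl.2) * e ^ (2 * jl.1))) *
    (congrArg (· ^ jl.2) hunit)

theorem natDegree_antidiagonalGramPoly_le (hp : p.natDegree ≤ n) (d : ℕ) :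
    (antidiagonalGramPoly p d).natDegree ≤ 2 * n := by
  refine natDegree_sum_le_of_forall_le _ _ fun jl _ => ?_
  by_cases hj : jl.1 ≤ n
  · exact (natDegree_C_mul_X_pow_le _ _).trans (by omega)
  · simp [coeff_eq_zero_of_natDegree_lt (hp.trans_lt (not_le.mp hj))]

theorem coeff_antidiagonalGramPoly (p : ℂ[X]) (j l : ℕ) :
    (antidiagonalGramPoly p (j + l)).coeff (2 * j) = p.coeff j * conj (p.coeff l) := by
  rw [antidiagonalGramPoly, finsetSum_coeff, sum_eq_single (j, l)]
  · rw [coeff_C_mul_X_pow, if_pos rfl]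
  · rintro ⟨j', l'⟩ hjl hne
    rw [coeff_C_mul_X_pow, if_neg]
    rw [HasAntidiagonal.mem_antidiagonal] at hjl
    intro h
    obtain rfl : j' = j := by omega
    obtain rfl : l' = l := by omega
    exact hne rfl
  · simp

theorem coeff_mul_conj_eq_of_radialNormSq_eq {ι : Type*} [Fintype ι] {e : ι → ℂ}
    (he : Function.Injective e) (he1 : ∀ k, ‖e k‖ = 1) (hcard : 2 * n < Fintype.card ι)
    (hp : p.natDegree ≤ n) (hq : q.natDegree ≤ n)
    (h : ∀ k, radialNormSq p (e k) = radialNormSq q (e k)) (j l : ℕ) :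
    p.coeff j * conj (p.coeff l) = q.coeff j * conj (q.coeff l) := by
  have hgram : antidiagonalGramPoly p (j + l) = antidiagonalGramPoly q (j + l) :=
    eq_of_natDegree_lt_card_of_eval_eq _ _ he
      (fun k => by simp only [eval_antidiagonalGramPoly _ _ (he1 k), h])
      (max_le (natDegree_antidiagonalGramPoly_le hp _) (natDegree_antidiagonalGramPoly_le hq _)
        |>.trans_lt hcard)
  rw [← coeff_antidiagonalGramPoly, ← coeff_antidiagonalGramPoly, hgram]

end Polynomial

theorem phaseless_complex_grid_identification_general (n : ℕ)
    (x : Fin (2 * n + 1) → ℝ) (hx : Function.Injective x)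
    (θ : Fin (2 * n + 1) → ℝ) (hθ : Function.Injective θ)
    (hθr : ∀ k, θ k ∈ Set.Ico 0 (2 * Real.pi))
    (p q : Polynomial ℂ) (hp : p.natDegree ≤ n) (hq : q.natDegree ≤ n)
    (h : ∀ i k,
      ‖p.eval ((x i : ℂ) * Complex.exp ((θ k : ℂ) * Complex.I))‖ =
      ‖q.eval ((x i : ℂ) * Complex.exp ((θ k : ℂ) * Complex.I))‖) :
    ∃ u : ℂ, ‖u‖ = 1 ∧ q = Polynomial.C u * p := by
  set e : Fin (2 * n + 1) → ℂ := fun k => Complex.exp ((θ k : ℂ) * Complex.I)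
  have he : Function.Injective e := fun k k' hkk' =>
    hθ <| Circle.exp_injOn_Ico (by simp) (hθr k) (hθr k') (Subtype.ext (by simpa using hkk'))
  have hcard : 2 * n < Fintype.card (Fin (2 * n + 1)) := by simp
  have hradial (k) : radialNormSq p (e k) = radialNormSq q (e k) :=
    radialNormSq_eq_of_norm_eval_eq hx hcard hp hq (h · k)
  exact exists_norm_eq_one_of_coeff_mul_conj_eq <|
    coeff_mul_conj_eq_of_radialNormSq_eq he (fun k => Complex.norm_exp_ofReal_mul_I _) hcard hp hq
      hradial

/-- Let `n ≥ 1`, let `x₀, …, x_{2n}` be pairwise distinct nonnegative real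
numbers, and let `θ₀, …, θ_{2n}` be pairwise distinct angles in `[0, 2π)`. Let `p` and `q` be
complex polynomials of degree at most `n`. If `|p(xᵢ·e^{iθₖ})| = |q(xᵢ·e^{iθₖ})|` for all
`i, k`, then `q = u·p` for some `u` with `|u| = 1`. -/
theorem phaseless_complex_grid_identification (n : ℕ) (hn : 1 ≤ n)
    (x : Fin (2 * n + 1) → ℝ) (hx0 : ∀ i, 0 ≤ x i) (hx : Function.Injective x)
    (θ : Fin (2 * n + 1) → ℝ) (hθ : Function.Injective θ)
    (hθr : ∀ k, θ k ∈ Set.Ico 0 (2 * Real.pi))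
    (p q : Polynomial ℂ) (hp : p.natDegree ≤ n) (hq : q.natDegree ≤ n)
    (h : ∀ i k,
      ‖p.eval ((x i : ℂ) * Complex.exp ((θ k : ℂ) * Complex.I))‖ =
      ‖q.eval ((x i : ℂ) * Complex.exp ((θ k : ℂ) * Complex.I))‖) :
    ∃ u : ℂ, ‖u‖ = 1 ∧ q = Polynomial.C u * p :=
  phaseless_complex_grid_identification_general n x hx θ hθ hθr p q hp hq h
end

section
/- Let p and q be complex polynomials such that |p(z)| = |q(z)| for every complex number z. Then there exists a complex number u with |u| = 1 such that q = u·p. -/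
/-!
Every root `a` of `p` is a root of `q`, and the common factor `X - a` can be cancelled: the
moduli of the quotients agree off `a`, hence everywhere by continuity, because `a` is not
isolated. Repeating this lowers the degree of `p` until it is constant; then `q` has no root
unless `p = 0`, so over an algebraically closed field it is constant too.
-/

open Polynomial

theorem Polynomial.norm_eval_eq_of_norm_eval_X_sub_C_mul_eq {𝕜 : Type*}
    [NontriviallyNormedField 𝕜] {p q : 𝕜[X]} {a : 𝕜}
    (h : ∀ z, ‖((X - C a) * p).eval z‖ = ‖((X - C a) * q).eval z‖) (z : 𝕜) :
    ‖p.eval z‖ = ‖q.eval z‖ := by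
  have off_a : Set.EqOn (fun z => ‖p.eval z‖) (fun z => ‖q.eval z‖) {a}ᶜ := fun w hw => by
    have hw : ‖w - a‖ ≠ 0 := by simpa [sub_eq_zero] using hw
    simpa only [eval_mul, eval_sub, eval_X, eval_C, norm_mul, mul_right_inj' hw] using h w
  exact congrFun ((continuous_norm.comp p.continuous).ext_on (dense_compl_singleton a)
    (continuous_norm.comp q.continuous) off_a) z

theorem Polynomial.exists_norm_eq_one_of_norm_eval_eq_C {𝕜 : Type*} [NormedField 𝕜]
    [IsAlgClosed 𝕜] {c : 𝕜} {q : 𝕜[X]} (h : ∀ z, ‖q.eval z‖ = ‖c‖) :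
    ∃ u, ‖u‖ = 1 ∧ q = C u * C c := by
  rcases eq_or_ne c 0 with rfl | hc
  · exact ⟨1, norm_one, Polynomial.funext fun z => by simpa using h z⟩
  have hq : q.degree = 0 := by
    by_contra hq
    obtain ⟨z, hz⟩ := IsAlgClosed.exists_root q hq
    exact hc <| norm_eq_zero.1 <| by rw [← h z, hz.eq_zero, norm_zero]
  rw [eq_C_of_degree_eq_zero hq] at h ⊢
  have hd : ‖q.coeff 0‖ = ‖c‖ := by simpa using h 0
  refine ⟨q.coeff 0 / c, ?_, by rw [← C_mul, div_mul_cancel₀ _ hc]⟩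
  rw [norm_div, hd, div_self (norm_ne_zero_iff.2 hc)]

theorem Polynomial.exists_norm_eq_one_C_mul_of_norm_eval_eq {𝕜 : Type*}
    [NontriviallyNormedField 𝕜] [IsAlgClosed 𝕜] {p q : 𝕜[X]}
    (h : ∀ z, ‖p.eval z‖ = ‖q.eval z‖) :
    ∃ u, ‖u‖ = 1 ∧ q = C u * p := by
  rcases le_or_gt p.degree 0 with hp | hp
  · rw [eq_C_of_degree_le_zero hp] at h ⊢
    exact exists_norm_eq_one_of_norm_eval_eq_C fun z => by simpa using (h z).symm
  obtain ⟨a, hpa⟩ := IsAlgClosed.exists_root p hp.ne'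
  have hqa : q.IsRoot a := norm_eq_zero.1 <| by rw [← h, hpa.eq_zero, norm_zero]
  obtain ⟨p₁, rfl⟩ := dvd_iff_isRoot.2 hpa
  obtain ⟨q₁, rfl⟩ := dvd_iff_isRoot.2 hqa
  have hp₁ : p₁ ≠ 0 := by rintro rfl; simp at hp
  have : p₁.natDegree < ((X - C a) * p₁).natDegree := by
    rw [(monic_X_sub_C a).natDegree_mul' hp₁, natDegree_X_sub_C]; omega
  obtain ⟨u, hu, rfl⟩ :=
    exists_norm_eq_one_C_mul_of_norm_eval_eq (norm_eval_eq_of_norm_eval_X_sub_C_mul_eq h)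
  exact ⟨u, hu, mul_left_comm _ _ _⟩
termination_by p.natDegree

/-- Let `p` and `q` be complex polynomials such that `|p(z)| = |q(z)|` for
every complex number `z`. Then there exists `u` with `|u| = 1` such that `q = u·p`. -/
theorem equal_modulus_implies_phase_equal (p q : Polynomial ℂ)
    (h : ∀ z : ℂ, ‖p.eval z‖ = ‖q.eval z‖) :
    ∃ u : ℂ, ‖u‖ = 1 ∧ q = Polynomial.C u * p :=
  exists_norm_eq_one_C_mul_of_norm_eval_eq h
end

section
/- Let n be a natural number and let p be a complex polynomial of degree at most n. Then there exist real polynomials A_0, A_1, ..., A_n and B_1, ..., B_n, each of degree at most 2n, such that for all real numbers x and y: |p(x·e^{iy})|^2 = Σ_{m=0}^{n} A_m(x)·cos(m y) + Σ_{m=1}^{n} B_m(x)·sin(m y). -/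
/-! With `z = x e^{iy}` and `p = ∑ cⱼ Xʲ`, `|p(z)|² = ∑_{j,k ≤ n} Re (cⱼ c̄ₖ zʲ z̄ᵏ)` and
`zʲ z̄ᵏ = x^{j+k} e^{i(j-k)y}`. So each term is `x^{j+k}` times a real combination of
`cos (|j-k| y)` and `sin (|j-k| y)`, with `j + k ≤ 2n` and `|j-k| ≤ n`, and such expansions are
closed under sums. -/
open Polynomial Finset ComplexConjugate

def HasTrigExpansion (n d : ℕ) (f : ℝ → ℝ → ℝ) : Prop :=
  ∃ A B : ℕ → ℝ[X], (∀ m, (A m).natDegree ≤ d) ∧ (∀ m, (B m).natDegree ≤ d) ∧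
    ∀ x y, f x y = (∑ m ∈ range (n + 1), (A m).eval x * Real.cos (m * y)) +
      ∑ m ∈ Icc 1 n, (B m).eval x * Real.sin (m * y)

namespace HasTrigExpansion

variable {n d : ℕ}

theorem zero : HasTrigExpansion n d 0 :=
  ⟨0, 0, by simp, by simp, by simp⟩

theorem add {f g : ℝ → ℝ → ℝ} (hf : HasTrigExpansion n d f) (hg : HasTrigExpansion n d g) :
    HasTrigExpansion n d (f + g) := by
  obtain ⟨A, B, hA, hB, hf⟩ := hf
  obtain ⟨A', B', hA', hB', hg⟩ := hg
  refine ⟨A + A', B + B', fun m => (natDegree_add_le _ _).trans (max_le (hA m) (hA' m)),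
    fun m => (natDegree_add_le _ _).trans (max_le (hB m) (hB' m)), fun x y => ?_⟩
  simp only [Pi.add_apply, eval_add, add_mul, sum_add_distrib, hf, hg]
  ring

theorem sum {ι : Type*} (s : Finset ι) {f : ι → ℝ → ℝ → ℝ}
    (h : ∀ i ∈ s, HasTrigExpansion n d (f i)) : HasTrigExpansion n d (∑ i ∈ s, f i) :=
  Finset.sum_induction _ _ (fun _ _ => add) zero h

theorem monomial {m k : ℕ} (hm : m ≤ n) (hk : k ≤ d) (a b : ℝ) :
    HasTrigExpansion n d fun x y => x ^ k * (a * Real.cos (m * y) + b * Real.sin (m * y)) := by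
  have hdeg (c : ℝ) (i : ℕ) : (if i = m then C c * X ^ k else 0).natDegree ≤ d := by
    split_ifs
    exacts [(natDegree_C_mul_X_pow_le _ _).trans hk, by simp]
  refine ⟨fun i => if i = m then C a * X ^ k else 0, fun i => if i = m then C b * X ^ k else 0,
    hdeg a, hdeg b, fun x y => ?_⟩
  simp only [apply_ite (eval x), ite_mul, eval_zero, zero_mul, sum_ite_eq', mem_range, eval_mul,
    eval_C, eval_pow, eval_X]
  rcases Nat.eq_zero_or_pos m with rfl | hm0
  · simp [mul_comm]
  · rw [if_pos (by omega), if_pos (mem_Icc.2 ⟨hm0, hm⟩)]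
    ring

end HasTrigExpansion

theorem norm_sq_eval_eq_sum_re {n : ℕ} {p : ℂ[X]} (hp : p.natDegree ≤ n) (z : ℂ) :
    ‖p.eval z‖ ^ 2 = ∑ j ∈ range (n + 1), ∑ k ∈ range (n + 1),
      (p.coeff j * conj (p.coeff k) * z ^ j * conj (z ^ k)).re := by
  rw [Complex.sq_norm, ← Complex.ofReal_re (Complex.normSq _), ← Complex.mul_conj,
    eval_eq_sum_range' (Nat.lt_succ_of_le hp), map_sum, sum_mul_sum, Complex.re_sum]
  refine sum_congr rfl fun j _ => ?_
  rw [Complex.re_sum]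
  refine sum_congr rfl fun k _ => ?_
  rw [map_mul]
  ring_nf

theorem pow_mul_conj_pow_of_le (x y : ℝ) {j k : ℕ} (hkj : k ≤ j) :
    ((x : ℂ) * Complex.exp (y * Complex.I)) ^ j * conj (((x : ℂ) * Complex.exp (y * Complex.I)) ^ k)
      = (x ^ (j + k) : ℝ) * Complex.exp (((j - k : ℕ) * y : ℝ) * Complex.I) := by
  rw [map_pow, map_mul, Complex.conj_ofReal, ← Complex.exp_conj, map_mul, Complex.conj_ofReal,
    Complex.conj_I, mul_pow, mul_pow, ← Complex.exp_nat_mul, ← Complex.exp_nat_mul]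
  push_cast [Nat.cast_sub hkj]
  rw [pow_add, mul_mul_mul_comm, ← Complex.exp_add]
  ring_nf

theorem re_mul_ofReal_mul_exp_mul_I (w : ℂ) (r θ : ℝ) :
    (w * ((r : ℂ) * Complex.exp (θ * Complex.I))).re =
      r * (w.re * Real.cos θ + -w.im * Real.sin θ) := by
  simp only [Complex.mul_re, Complex.mul_im, Complex.ofReal_re, Complex.ofReal_im,
    Complex.exp_ofReal_mul_I_re, Complex.exp_ofReal_mul_I_im]
  ring

theorem hasTrigExpansion_re_mul_pow_mul_conj_pow (w : ℂ) {n j k : ℕ} (hj : j ≤ n) (hk : k ≤ n) :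
    HasTrigExpansion n (2 * n) fun x y => (w * ((x : ℂ) * Complex.exp (y * Complex.I)) ^ j *
      conj (((x : ℂ) * Complex.exp (y * Complex.I)) ^ k)).re := by
  rcases le_total k j with hkj | hjk
  · convert HasTrigExpansion.monomial (n := n) (d := 2 * n) (m := j - k) (k := j + k)
      (by omega) (by omega) w.re (-w.im) using 3 with x y
    rw [mul_assoc, pow_mul_conj_pow_of_le x y hkj, re_mul_ofReal_mul_exp_mul_I]
  · convert HasTrigExpansion.monomial (n := n) (d := 2 * n) (m := k - j) (k := k + j)
      (by omega) (by omega) (conj w).re (-(conj w).im) using 3 with x y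
    -- `Re u = Re (conj u)` swaps the roles of `j` and `k`.
    rw [← re_mul_ofReal_mul_exp_mul_I, ← pow_mul_conj_pow_of_le x y hjk, ← Complex.conj_re]
    simp only [map_mul, Complex.conj_conj]
    ring_nf

/-- Let `p` be a complex polynomial of degree at most `n`. Then there exist
real polynomials `A₀, …, Aₙ` and `B₁, …, Bₙ`, each of degree at most `2n`, such that for all
real `x` and `y`:
`|p(x·e^{iy})|² = ∑_{m=0}^{n} Aₘ(x)·cos(my) + ∑_{m=1}^{n} Bₘ(x)·sin(my)`. -/
theorem squared_modulus_trig_decomposition (n : ℕ) (p : Polynomial ℂ)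
    (hp : p.natDegree ≤ n) :
    ∃ A B : ℕ → Polynomial ℝ,
      (∀ m, (A m).natDegree ≤ 2 * n) ∧ (∀ m, (B m).natDegree ≤ 2 * n) ∧
      ∀ x y : ℝ,
        ‖p.eval ((x : ℂ) * Complex.exp ((y : ℂ) * Complex.I))‖ ^ 2 =
          (∑ m ∈ Finset.range (n + 1), (A m).eval x * Real.cos (m * y)) +
          ∑ m ∈ Finset.Icc 1 n, (B m).eval x * Real.sin (m * y) := by
  obtain ⟨A, B, hA, hB, hAB⟩ := HasTrigExpansion.sum (range (n + 1)) fun j hj =>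
    HasTrigExpansion.sum (range (n + 1)) fun k hk =>
      hasTrigExpansion_re_mul_pow_mul_conj_pow (p.coeff j * conj (p.coeff k))
        (mem_range_succ_iff.1 hj) (mem_range_succ_iff.1 hk)
  refine ⟨A, B, hA, hB, fun x y => ?_⟩
  rw [norm_sq_eval_eq_sum_re hp, ← hAB]
  simp only [Finset.sum_apply]
end

section
/- Let n be a natural number and let w be a complex polynomial of degree at most n such that w(0) = 1 and |w(ω)| = 1 for every complex number ω with ω^{n+1} = 1. Then w is the constant polynomial 1. -/
/-!
Since `deg w < n + 1`, averaging `w` over the `(n+1)`-th roots of unity kills every coefficient but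
the constant one, so this average is `w(0) = 1`. An average of points of the closed unit disc equals
`1` only if every point is `1`; hence `w - 1` has `n + 1` roots while its degree is at most `n`.
-/

open Polynomial Finset

namespace IsPrimitiveRoot

variable {R : Type*} [CommRing R] [IsDomain R] {ζ : R} {N : ℕ}

theorem sum_pow_pow_eq_zero (hζ : IsPrimitiveRoot ζ N) {k : ℕ} (hk0 : k ≠ 0) (hkN : k < N) :
    ∑ j ∈ range N, (ζ ^ j) ^ k = 0 := by
  have hne : ζ ^ k - 1 ≠ 0 := sub_ne_zero.2 (hζ.pow_ne_one_of_pos_of_lt hk0 hkN)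
  have hgeom := geom_sum_mul (ζ ^ k) N
  rw [← pow_mul, mul_comm k, pow_mul, hζ.pow_eq_one, one_pow, sub_self] at hgeom
  simpa only [← pow_mul, mul_comm] using (mul_eq_zero.1 hgeom).resolve_right hne

theorem sum_eval_pow (hζ : IsPrimitiveRoot ζ N) {p : R[X]} (hp : p.natDegree < N) :
    ∑ j ∈ range N, p.eval (ζ ^ j) = N * p.coeff 0 := by
  calc ∑ j ∈ range N, p.eval (ζ ^ j)
      = ∑ k ∈ range N, p.coeff k * ∑ j ∈ range N, (ζ ^ j) ^ k := by
        simp_rw [eval_eq_sum_range' hp, mul_sum]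
        exact sum_comm
    _ = p.coeff 0 * ∑ j ∈ range N, (ζ ^ j) ^ 0 := by
        refine sum_eq_single_of_mem 0 (mem_range.2 (by omega)) fun k hk hk0 => ?_
        rw [hζ.sum_pow_pow_eq_zero hk0 (mem_range.1 hk), mul_zero]
    _ = N * p.coeff 0 := by simp [mul_comm]

theorem eq_of_eval_pow_eq (hζ : IsPrimitiveRoot ζ N) {p q : R[X]} (hp : p.natDegree < N)
    (hq : q.natDegree < N) (h : ∀ j < N, p.eval (ζ ^ j) = q.eval (ζ ^ j)) : p = q :=
  eq_of_natDegree_lt_card_of_eval_eq p q (f := fun j : Fin N => ζ ^ (j : ℕ))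
    (fun i j hij => Fin.ext (hζ.pow_inj i.2 j.2 hij)) (fun j => h j j.2)
    (by simpa using ⟨hp, hq⟩)

end IsPrimitiveRoot

theorem Complex.eq_one_of_norm_le_one_of_sum_eq_card {ι : Type*} {s : Finset ι} {z : ι → ℂ}
    (hz : ∀ i ∈ s, ‖z i‖ ≤ 1) (hsum : ∑ i ∈ s, z i = #s) : ∀ i ∈ s, z i = 1 := by
  have hre : ∀ i ∈ s, (z i).re ≤ 1 := fun i hi => (Complex.re_le_norm _).trans (hz i hi)
  have hsum_re : ∑ i ∈ s, (z i).re = ∑ i ∈ s, (1 : ℝ) := by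
    simpa [Complex.re_sum] using congrArg Complex.re hsum
  intro i hi
  have hre_one : (z i).re = 1 := (sum_eq_sum_iff_of_le hre).1 hsum_re i hi
  have hnorm : (z i).re = ‖z i‖ := le_antisymm (Complex.re_le_norm _) (hre_one ▸ hz i hi)
  exact Complex.ext hre_one (Complex.nonneg_iff.1 (Complex.re_eq_norm.1 hnorm)).2.symm

/-- Let `w` be a complex polynomial of degree at most `n` such that
`w(0) = 1` and `|w(ω)| = 1` for every complex number `ω` with `ω^{n+1} = 1`. Then `w` is the
constant polynomial `1`. -/
theorem roots_of_unity_rigidity (n : ℕ) (w : Polynomial ℂ) (hw : w.natDegree ≤ n)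
    (h0 : w.eval 0 = 1) (h1 : ∀ ω : ℂ, ω ^ (n + 1) = 1 → ‖w.eval ω‖ = 1) :
    w = 1 := by
  obtain ⟨ζ, hζ⟩ : ∃ ζ : ℂ, IsPrimitiveRoot ζ (n + 1) :=
    ⟨_, Complex.isPrimitiveRoot_exp (n + 1) n.succ_ne_zero⟩
  have hdeg : w.natDegree < n + 1 := Nat.lt_succ_of_le hw
  have hsum : ∑ j ∈ range (n + 1), w.eval (ζ ^ j) = #(range (n + 1)) := by
    rw [hζ.sum_eval_pow hdeg, coeff_zero_eq_eval_zero, h0, card_range, mul_one]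
  have heval_one : ∀ j ∈ range (n + 1), w.eval (ζ ^ j) = 1 :=
    Complex.eq_one_of_norm_le_one_of_sum_eq_card
      (fun j _ => (h1 _ (by rw [← pow_mul, mul_comm, pow_mul, hζ.pow_eq_one, one_pow])).le) hsum
  exact hζ.eq_of_eval_pow_eq hdeg (by simp) fun j hj => by
    rw [heval_one j (mem_range.2 hj), eval_one]
end
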